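/- arXiv:0901.4378 — 2 statements merged into one kernel-verified Lean document; each statement's English description precedes it below -/
import Mathlib

section
/- Let X ∈ 𝓕 and suppose X = Y_1 * Y_2 * ⋯ * Y_s = Z_1 * Z_2 * ⋯ * Z_t, where the Y_i have pairwise disjoint supports, the Z_j have pairwise disjoint supports, and all Y_i and Z_j are irreducible elements of 𝓕. Then s = t and, after reordering the factors, Y_i = Z_i (as subsets of Sym(ℕ)) for 1 ≤ i ≤ s. -/
open Equiv Pointwise
open scoped Classical

namespace FPS

/-- The support of a permutation of `ℕ`. -/
def psupp (ρ : Equiv.Perm ℕ) : Set ℕ := {ω | ρ ω ≠ ω}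

/-- The support of a set of permutations of `ℕ`. -/
def ssupp (X : Set (Equiv.Perm ℕ)) : Set ℕ := ⋃ ρ ∈ X, psupp ρ

/-- `Sym(α)`: the subgroup of permutations of `ℕ` supported on the subset `α`. -/
def symOn (α : Set ℕ) : Subgroup (Equiv.Perm ℕ) where
  carrier := {g | ∀ ω, ω ∉ α → g ω = ω}
  one_mem' := fun _ _ => rfl
  mul_mem' := by
    intro a b ha hb ω hω
    have hbω := hb ω hω
    have haω := ha ω hω
    show a (b ω) = ω
    rw [hbω, haω]
  inv_mem' := by
    intro a ha ω hω
    have haω := ha ω hω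
    show a⁻¹ ω = ω
    nth_rewrite 1 [← haω]
    exact Equiv.symm_apply_apply a ω

/-- Membership in the family `𝓕`: finite nonempty sets of finitary permutations,
different from `{1}`. -/
def memF (X : Set (Equiv.Perm ℕ)) : Prop :=
  X.Finite ∧ X.Nonempty ∧ X ≠ {1} ∧ ∀ ρ ∈ X, (psupp ρ).Finite

/-- Membership in `𝓢^q`: members of `𝓕` all of whose elements are products of `q`-cycles
(each orbit on the support has size `q`) with full support. -/
def memS (q : ℕ) (X : Set (Equiv.Perm ℕ)) : Prop :=
  memF X ∧ (∀ ρ ∈ X, psupp ρ = ssupp X) ∧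
    ∀ ρ ∈ X, ∀ ω ∈ psupp ρ, (Set.range fun n : ℤ => (ρ ^ n) ω).ncard = q

/-- Right conjugation `x ↦ x^g = g⁻¹ x g`. -/
def conjR (g x : Equiv.Perm ℕ) : Equiv.Perm ℕ := g⁻¹ * x * g

/-- Conjugate of a set of permutations: `X^g`. -/
def conjSet (g : Equiv.Perm ℕ) (X : Set (Equiv.Perm ℕ)) : Set (Equiv.Perm ℕ) := conjR g '' X

/-- The setwise stabilizer (under conjugation) of a set of permutations,
as a subgroup of the full group `Sym(ℕ)`. -/
def setStab (X : Set (Equiv.Perm ℕ)) : Subgroup (Equiv.Perm ℕ) where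
  carrier := {g | ∀ x, x ∈ X ↔ g⁻¹ * x * g ∈ X}
  one_mem' := by
    intro x
    simp
  mul_mem' := by
    intro a b ha hb x
    have h1 := ha x
    have h2 := hb (a⁻¹ * x * a)
    have e : b⁻¹ * (a⁻¹ * x * a) * b = (a * b)⁻¹ * x * (a * b) := by group
    rw [e] at h2
    exact h1.trans h2
  inv_mem' := by
    intro a ha x
    have h := ha (a * x * a⁻¹)
    have e : a⁻¹ * (a * x * a⁻¹) * a = x := by group
    rw [e] at h
    have e2 : a * x * a⁻¹ = a⁻¹⁻¹ * x * a⁻¹ := by group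
    rw [e2] at h
    exact h.symm

/-- `N_X`: the stabilizer of `X` in `G_X = Sym(supp X)`. -/
def NX (X : Set (Equiv.Perm ℕ)) : Subgroup (Equiv.Perm ℕ) := symOn (ssupp X) ⊓ setStab X

/-- `S_X = C_{G_X}(X)`: the pointwise centralizer of `X` in `G_X = Sym(supp X)`. -/
def SX (X : Set (Equiv.Perm ℕ)) : Subgroup (Equiv.Perm ℕ) :=
  symOn (ssupp X) ⊓ Subgroup.centralizer X

/-- `Q` is a Sylow `p`-subgroup of the subgroup `H` (that is, a maximal `p`-subgroup of `H`). -/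
def IsSylowOf {G : Type*} [Group G] (p : ℕ) (Q H : Subgroup G) : Prop :=
  Q ≤ H ∧ IsPGroup p Q ∧ ∀ R : Subgroup G, R ≤ H → IsPGroup p R → Q ≤ R → R = Q

/-- `Ξ_X = ⋃_{g ∈ G_X} X^g`. -/
def Xi (X : Set (Equiv.Perm ℕ)) : Set (Equiv.Perm ℕ) :=
  ⋃ g ∈ (symOn (ssupp X) : Set (Equiv.Perm ℕ)), conjSet g X

/-- `X` is closed: `C_{G_X}(Q_X) ∩ Ξ_X = X` for (any) Sylow `p`-subgroup `Q_X` of `S_X`. -/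
def IsClosedSet (p : ℕ) (X : Set (Equiv.Perm ℕ)) : Prop :=
  ∀ Q : Subgroup (Equiv.Perm ℕ), IsSylowOf p Q (SX X) →
    (Subgroup.centralizer (Q : Set (Equiv.Perm ℕ)) : Set (Equiv.Perm ℕ)) ∩ Xi X = X

/-- `X` is exact: `supp Q_X = supp X` for (any) Sylow `p`-subgroup `Q_X` of `S_X`. -/
def IsExactSet (p : ℕ) (X : Set (Equiv.Perm ℕ)) : Prop :=
  ∀ Q : Subgroup (Equiv.Perm ℕ), IsSylowOf p Q (SX X) →
    ssupp (Q : Set (Equiv.Perm ℕ)) = ssupp X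

/-- `X` is projective: `Q_X = 1`. -/
def IsProjectiveSet (p : ℕ) (X : Set (Equiv.Perm ℕ)) : Prop :=
  ∀ Q : Subgroup (Equiv.Perm ℕ), IsSylowOf p Q (SX X) → Q = ⊥

/-- `X ∈ 𝓕` is irreducible if it is not a product of two members of `𝓕`
with disjoint supports. -/
def IsIrred (X : Set (Equiv.Perm ℕ)) : Prop :=
  memF X ∧ ∀ Y Z : Set (Equiv.Perm ℕ), memF Y → memF Z →
    Disjoint (ssupp Y) (ssupp Z) → X ≠ Y * Z

/-- Two sets of permutations are equivalent if they are conjugate in `Sym(ℕ)`. -/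
def EquivSet (X Y : Set (Equiv.Perm ℕ)) : Prop := ∃ g : Equiv.Perm ℕ, conjSet g X = Y

/-- `D` is a realization of `Δ^s X`: the diagonal of a product of `s` disjointly
supported conjugates of `X`. -/
def IsDelta (s : ℕ) (X D : Set (Equiv.Perm ℕ)) : Prop :=
  ∃ g : Fin s → Equiv.Perm ℕ,
    (∀ i j, i ≠ j → Disjoint (ssupp (conjSet (g i) X)) (ssupp (conjSet (g j) X))) ∧
    D = (fun x => (List.ofFn fun i => conjR (g i) x).prod) '' X

/-- `D` is a realization of the `a`-fold `*`-power `X^a`: a product of `a` disjointly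
supported conjugates of `X`. -/
def IsStarPow (a : ℕ) (X D : Set (Equiv.Perm ℕ)) : Prop :=
  ∃ g : Fin a → Equiv.Perm ℕ,
    (∀ i j, i ≠ j → Disjoint (ssupp (conjSet (g i) X)) (ssupp (conjSet (g j) X))) ∧
    D = (List.ofFn fun i => conjSet (g i) X).prod

/-- `X` is a transitive set: `⟨X⟩` is transitive on `supp X`. -/
def TransitiveSet (X : Set (Equiv.Perm ℕ)) : Prop :=
  ∀ a ∈ ssupp X, ∀ b ∈ ssupp X, ∃ g ∈ Subgroup.closure X, g a = b

lemma mem_setStab {X : Set (Equiv.Perm ℕ)} {g : Equiv.Perm ℕ} :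
    g ∈ setStab X ↔ ∀ x, x ∈ X ↔ g⁻¹ * x * g ∈ X := Iff.rfl

lemma conjR_mem {X : Set (Equiv.Perm ℕ)} {g : Equiv.Perm ℕ} (hg : g ∈ setStab X)
    {x : Equiv.Perm ℕ} (hx : x ∈ X) : g⁻¹ * x * g ∈ X :=
  (mem_setStab.mp hg x).mp hx

lemma conjL_mem {X : Set (Equiv.Perm ℕ)} {g : Equiv.Perm ℕ} (hg : g ∈ setStab X)
    {x : Equiv.Perm ℕ} (hx : x ∈ X) : g * x * g⁻¹ ∈ X := by
  have h := mem_setStab.mp ((setStab X).inv_mem hg) x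
  rw [inv_inv] at h
  exact h.mp hx

/-- The permutation of `X` induced by conjugation by an element of `N_X`. -/
def conjPerm (X : Set (Equiv.Perm ℕ)) (g : NX X) : Equiv.Perm X where
  toFun x := ⟨(g : Equiv.Perm ℕ) * x * (g : Equiv.Perm ℕ)⁻¹,
    conjL_mem (Subgroup.mem_inf.mp g.2).2 x.2⟩
  invFun x := ⟨(g : Equiv.Perm ℕ)⁻¹ * x * (g : Equiv.Perm ℕ),
    conjR_mem (Subgroup.mem_inf.mp g.2).2 x.2⟩
  left_inv x := by
    apply Subtype.ext
    show (g : Equiv.Perm ℕ)⁻¹ * ((g : Equiv.Perm ℕ) * x * (g : Equiv.Perm ℕ)⁻¹) *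
      (g : Equiv.Perm ℕ) = x
    group
  right_inv x := by
    apply Subtype.ext
    show (g : Equiv.Perm ℕ) * ((g : Equiv.Perm ℕ)⁻¹ * x * (g : Equiv.Perm ℕ)) *
      (g : Equiv.Perm ℕ)⁻¹ = x
    group

/-- The action of `N_X` on `X` by conjugation, as a homomorphism `N_X →* Sym(X)`. -/
def MXhom (X : Set (Equiv.Perm ℕ)) : NX X →* Equiv.Perm X where
  toFun := conjPerm X
  map_one' := by
    apply Equiv.ext
    intro x
    apply Subtype.ext
    show ((1 : NX X) : Equiv.Perm ℕ) * x * ((1 : NX X) : Equiv.Perm ℕ)⁻¹ = x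
    simp
  map_mul' a b := by
    apply Equiv.ext
    intro x
    apply Subtype.ext
    show ((a * b : NX X) : Equiv.Perm ℕ) * x * ((a * b : NX X) : Equiv.Perm ℕ)⁻¹
      = (a : Equiv.Perm ℕ) * ((b : Equiv.Perm ℕ) * x * (b : Equiv.Perm ℕ)⁻¹) *
        (a : Equiv.Perm ℕ)⁻¹
    push_cast
    group

/-- `M_X = N_X/S_X`, realized as the image of `N_X` in `Sym(X)` (the action of `N_X`
on `X` is by conjugation, with kernel `S_X`). -/
def MX (X : Set (Equiv.Perm ℕ)) : Subgroup (Equiv.Perm X) := (MXhom X).range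

/-- The permutation module `k[Ω]` of the `G`-set `Ω` has a nonzero projective direct summand. -/
def HasProjSummand (k : Type) [Field k] (G : Type*) [Group G] (Ω : Type*) [MulAction G Ω] :
    Prop :=
  ∃ P W : Submodule (MonoidAlgebra k G) (Representation.ofMulAction k G Ω).asModule,
    IsCompl P W ∧ P ≠ ⊥ ∧ Module.Projective (MonoidAlgebra k G) P

/-- `X` is a fixed point set: `X ∈ 𝓢^q`, `X` is closed, and the permutation
`k M_X`-module `k[X]` has a nonzero projective direct summand. -/
def IsFPS (p q : ℕ) (k : Type) [Field k] (X : Set (Equiv.Perm ℕ)) : Prop :=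
  memS q X ∧ IsClosedSet p X ∧ HasProjSummand k (MX X) X

/-- `X` and `Y` (with disjoint supports) are coprime: `N_{X*Y} = N_X × N_Y`. -/
def CoprimeSets (X Y : Set (Equiv.Perm ℕ)) : Prop := NX (X * Y) = NX X ⊔ NX Y

/-- `X` is projective-free: no factor in a decomposition of `X` into irreducibles
is projective. -/
def ProjFree (p : ℕ) (X : Set (Equiv.Perm ℕ)) : Prop :=
  ∀ L : List (Set (Equiv.Perm ℕ)), (∀ Y ∈ L, IsIrred Y) →
    L.Pairwise (fun A B => Disjoint (ssupp A) (ssupp B)) →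
    X = L.prod → ∀ Y ∈ L, ¬ IsProjectiveSet p Y


-- auxiliary development
lemma mem_psupp {x : Perm ℕ} {ω : ℕ} : ω ∈ psupp x ↔ x ω ≠ ω := Iff.rfl

lemma mem_ssupp {X : Set (Perm ℕ)} {ω : ℕ} : ω ∈ ssupp X ↔ ∃ x ∈ X, x ω ≠ ω := by
  simp [ssupp, psupp]

lemma psupp_subset_ssupp {X : Set (Perm ℕ)} {x : Perm ℕ} (hx : x ∈ X) :
    psupp x ⊆ ssupp X := fun ω hω => mem_ssupp.mpr ⟨x, hx, hω⟩

def Pres (A : Set ℕ) (x : Perm ℕ) : Prop := ∀ ω, x ω ∈ A ↔ ω ∈ A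

lemma pres_of_psupp_subset {A : Set ℕ} {x : Perm ℕ} (h : psupp x ⊆ A) : Pres A x := by
  intro ω
  by_cases he : x ω = ω
  · rw [he]
  · constructor
    · intro _; exact h he
    · intro _
      apply h
      intro hc
      exact he (x.injective hc)

lemma Pres.compl {A : Set ℕ} {x : Perm ℕ} (h : Pres A x) : Pres Aᶜ x := by
  intro ω; simp [Set.mem_compl_iff, h ω]

lemma Pres.inter {A B : Set ℕ} {x : Perm ℕ} (hA : Pres A x) (hB : Pres B x) :
    Pres (A ∩ B) x := by
  intro ω; simp [Set.mem_inter_iff, hA ω, hB ω]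

lemma Pres.mul {A : Set ℕ} {x y : Perm ℕ} (hx : Pres A x) (hy : Pres A y) :
    Pres A (x * y) := by
  intro ω
  have : (x * y) ω = x (y ω) := rfl
  rw [this, hx (y ω), hy ω]

noncomputable def restr (A : Set ℕ) (x : Equiv.Perm ℕ) : Equiv.Perm ℕ :=
  if h : Pres A x then
    { toFun := fun ω => if ω ∈ A then x ω else ω
      invFun := fun ω => if ω ∈ A then x⁻¹ ω else ω
      left_inv := by
        intro ω
        by_cases hω : ω ∈ A
        · simp only [if_pos hω, if_pos ((h ω).mpr hω), Equiv.Perm.inv_def, Equiv.symm_apply_apply]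
        · simp only [if_neg hω]
      right_inv := by
        intro ω
        by_cases hω : ω ∈ A
        · have h2 : x⁻¹ ω ∈ A := by
            have := h (x⁻¹ ω)
            rw [(by exact Equiv.apply_symm_apply x ω : x (x⁻¹ ω) = ω)] at this
            exact this.mp hω
          simp only [if_pos hω, if_pos h2, Equiv.Perm.inv_def, Equiv.apply_symm_apply,
            if_pos (by simpa only [Equiv.Perm.inv_def] using h2)]
        · simp only [if_neg hω] }
  else 1

lemma restr_apply {A : Set ℕ} {x : Perm ℕ} (h : Pres A x) (ω : ℕ) :
    restr A x ω = if ω ∈ A then x ω else ω := by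
  rw [restr, dif_pos h]; rfl

lemma restr_apply_mem {A : Set ℕ} {x : Perm ℕ} (h : Pres A x) {ω : ℕ} (hω : ω ∈ A) :
    restr A x ω = x ω := by rw [restr_apply h, if_pos hω]

lemma restr_apply_not_mem {A : Set ℕ} {x : Perm ℕ} (h : Pres A x) {ω : ℕ} (hω : ω ∉ A) :
    restr A x ω = ω := by rw [restr_apply h, if_neg hω]

lemma psupp_restr {A : Set ℕ} {x : Perm ℕ} (h : Pres A x) :
    psupp (restr A x) = psupp x ∩ A := by
  ext ω
  by_cases hω : ω ∈ A
  · simp [mem_psupp, restr_apply_mem h hω, hω, Set.mem_inter_iff]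
  · simp [mem_psupp, restr_apply_not_mem h hω, hω, Set.mem_inter_iff]


def SplitAlong (X : Set (Perm ℕ)) (A : Set ℕ) : Prop :=
  (∀ x ∈ X, Pres A x) ∧ ∀ x ∈ X, ∀ x' ∈ X, restr A x * restr Aᶜ x' ∈ X

lemma pres_of_psupp_subset_compl {A : Set ℕ} {z : Perm ℕ} (hz : psupp z ⊆ Aᶜ) :
    Pres A z := by
  have := (pres_of_psupp_subset hz).compl
  rwa [compl_compl] at this

lemma restr_mul_eq_left {A : Set ℕ} {y z : Perm ℕ} (hy : psupp y ⊆ A)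
    (hz : psupp z ⊆ Aᶜ) : restr A (y * z) = y := by
  have hPy : Pres A y := pres_of_psupp_subset hy
  have hPz : Pres A z := pres_of_psupp_subset_compl hz
  have hP : Pres A (y * z) := hPy.mul hPz
  ext ω
  by_cases hω : ω ∈ A
  · rw [restr_apply_mem hP hω]
    have hzω : z ω = ω := by
      by_contra hne
      exact (hz hne) hω
    show y (z ω) = y ω
    rw [hzω]
  · rw [restr_apply_not_mem hP hω]
    by_contra hne
    exact hω (hy fun hc => hne hc.symm)

lemma restr_mul_eq_right {A : Set ℕ} {y z : Perm ℕ} (hy : psupp y ⊆ A)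
    (hz : psupp z ⊆ Aᶜ) : restr Aᶜ (y * z) = z := by
  have hPy : Pres Aᶜ y := (pres_of_psupp_subset hy).compl
  have hPz : Pres Aᶜ z := pres_of_psupp_subset hz
  have hP : Pres Aᶜ (y * z) := hPy.mul hPz
  ext ω
  by_cases hω : ω ∈ Aᶜ
  · rw [restr_apply_mem hP hω]
    show y (z ω) = z ω
    by_contra hne
    have : z ω ∈ psupp y := fun hc => hne hc
    exact ((hPz ω).mpr hω) (hy this)
  · rw [restr_apply_not_mem hP hω]
    by_contra hne
    exact hω (hz fun hc => hne hc.symm)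

lemma restr_mul_restr_compl {A : Set ℕ} {x : Perm ℕ} (h : Pres A x) :
    restr A x * restr Aᶜ x = x := by
  ext ω
  show restr A x (restr Aᶜ x ω) = x ω
  by_cases hω : ω ∈ A
  · rw [restr_apply_not_mem h.compl (by simpa using hω), restr_apply_mem h hω]
  · rw [restr_apply_mem h.compl (by simpa using hω),
      restr_apply_not_mem h (by simpa using (h.compl ω).mpr (by simpa using hω))]

lemma splitAlong_of_eq_mul {X Y Z : Set (Perm ℕ)} {A : Set ℕ} (hX : X = Y * Z)
    (hY : ∀ y ∈ Y, psupp y ⊆ A) (hZ : ∀ z ∈ Z, psupp z ⊆ Aᶜ) : SplitAlong X A := by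
  constructor
  · intro x hx
    rw [hX] at hx
    obtain ⟨y, hy, z, hz, rfl⟩ := Set.mem_mul.mp hx
    exact (pres_of_psupp_subset (hY y hy)).mul (pres_of_psupp_subset_compl (hZ z hz))
  · intro x hx x' hx'
    rw [hX] at hx hx' ⊢
    obtain ⟨y, hy, z, hz, rfl⟩ := Set.mem_mul.mp hx
    obtain ⟨y', hy', z', hz', rfl⟩ := Set.mem_mul.mp hx'
    rw [restr_mul_eq_left (hY y hy) (hZ z hz), restr_mul_eq_right (hY y' hy') (hZ z' hz')]
    exact Set.mul_mem_mul hy hz'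

lemma left_eq_restr_image {X Y Z : Set (Perm ℕ)} {A : Set ℕ} (hX : X = Y * Z)
    (hY : ∀ y ∈ Y, psupp y ⊆ A) (hZ : ∀ z ∈ Z, psupp z ⊆ Aᶜ) (hZne : Z.Nonempty) :
    Y = restr A '' X := by
  ext y
  constructor
  · intro hy
    obtain ⟨z, hz⟩ := hZne
    exact ⟨y * z, hX ▸ Set.mul_mem_mul hy hz, restr_mul_eq_left (hY y hy) (hZ z hz)⟩
  · rintro ⟨x, hx, rfl⟩
    rw [hX] at hx
    obtain ⟨y, hy, z, hz, rfl⟩ := Set.mem_mul.mp hx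
    rw [restr_mul_eq_left (hY y hy) (hZ z hz)]
    exact hy

lemma eq_mul_restr {X : Set (Perm ℕ)} {A : Set ℕ} (h : SplitAlong X A) :
    X = (restr A '' X) * (restr Aᶜ '' X) := by
  ext x
  constructor
  · intro hx
    rw [← restr_mul_restr_compl (h.1 x hx)]
    exact Set.mul_mem_mul ⟨x, hx, rfl⟩ ⟨x, hx, rfl⟩
  · rintro ⟨u, ⟨a, ha, rfl⟩, v, ⟨b, hb, rfl⟩, rfl⟩
    exact h.2 a ha b hb

lemma splitAlong_compl {X : Set (Perm ℕ)} {A : Set ℕ} (h : SplitAlong X A) :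
    SplitAlong X Aᶜ := by
  refine ⟨fun x hx => (h.1 x hx).compl, fun x hx x' hx' => ?_⟩
  have hmem := h.2 x' hx' x hx
  have heq : restr Aᶜ x * restr Aᶜᶜ x' = restr A x' * restr Aᶜ x := by
    rw [compl_compl]
    have hPx : Pres Aᶜ x := (h.1 x hx).compl
    have hPx' : Pres A x' := h.1 x' hx'
    ext ω
    show restr Aᶜ x (restr A x' ω) = restr A x' (restr Aᶜ x ω)
    by_cases hω : ω ∈ A
    · have e1 : restr A x' ω = x' ω := restr_apply_mem hPx' hω
      have hx'A : x' ω ∈ A := (hPx' ω).mpr hω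
      have e2 : restr Aᶜ x (x' ω) = x' ω := restr_apply_not_mem hPx (by simpa using hx'A)
      have e3 : restr Aᶜ x ω = ω := restr_apply_not_mem hPx (by simpa using hω)
      simp only [e1, e2, e3]
    · have e1 : restr A x' ω = ω := restr_apply_not_mem hPx' hω
      have e2 : restr Aᶜ x ω = x ω := restr_apply_mem hPx (by simpa using hω)
      have hxc : x ω ∈ Aᶜ := (hPx ω).mpr (by simpa using hω)
      have e3 : restr A x' (x ω) = x ω := restr_apply_not_mem hPx' (by simpa using hxc)
      simp only [e1, e2, e3]
  rw [heq]
  exact hmem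

lemma splitAlong_inter {X : Set (Perm ℕ)} {A B : Set ℕ} (hA : SplitAlong X A)
    (hB : SplitAlong X B) : SplitAlong X (A ∩ B) := by
  refine ⟨fun x hx => (hA.1 x hx).inter (hB.1 x hx), fun x hx x' hx' => ?_⟩
  set w := restr B x * restr Bᶜ x' with hw
  have hwX : w ∈ X := hB.2 x hx x' hx'
  have huX : restr A w * restr Aᶜ x' ∈ X := hA.2 w hwX x' hx'
  have heq : restr A w * restr Aᶜ x' = restr (A ∩ B) x * restr (A ∩ B)ᶜ x' := by
    have hPAw : Pres A w := hA.1 w hwX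
    have hPAx' : Pres A x' := hA.1 x' hx'
    have hPBx : Pres B x := hB.1 x hx
    have hPBx' : Pres B x' := hB.1 x' hx'
    have hPC : Pres (A ∩ B) x := (hA.1 x hx).inter hPBx
    have hPCc : Pres (A ∩ B)ᶜ x' := (hPAx'.inter hPBx').compl
    ext ω
    show restr A w (restr Aᶜ x' ω) = restr (A ∩ B) x (restr (A ∩ B)ᶜ x' ω)
    have hwω : w ω = restr B x (restr Bᶜ x' ω) := rfl
    by_cases hωA : ω ∈ A
    · have eA : restr Aᶜ x' ω = ω := restr_apply_not_mem hPAx'.compl (by simpa using hωA)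
      have eW : restr A w ω = w ω := restr_apply_mem hPAw hωA
      by_cases hωB : ω ∈ B
      · have eB1 : restr Bᶜ x' ω = ω := restr_apply_not_mem hPBx'.compl (by simpa using hωB)
        have eB2 : restr B x ω = x ω := restr_apply_mem hPBx hωB
        have eC1 : restr (A ∩ B)ᶜ x' ω = ω :=
          restr_apply_not_mem hPCc (by simp [hωA, hωB])
        have eC2 : restr (A ∩ B) x ω = x ω := restr_apply_mem hPC ⟨hωA, hωB⟩
        simp only [eA, eW, hwω, eB1, eB2, eC1, eC2]
      · have hx'B : x' ω ∉ B := fun hc => hωB ((hPBx' ω).mp hc)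
        have eB1 : restr Bᶜ x' ω = x' ω := restr_apply_mem hPBx'.compl (by simpa using hωB)
        have eB2 : restr B x (x' ω) = x' ω := restr_apply_not_mem hPBx hx'B
        have eC1 : restr (A ∩ B)ᶜ x' ω = x' ω :=
          restr_apply_mem hPCc (by simp [hωB])
        have eC2 : restr (A ∩ B) x (x' ω) = x' ω :=
          restr_apply_not_mem hPC (fun hc => hx'B hc.2)
        simp only [eA, eW, hwω, eB1, eB2, eC1, eC2]
    · have hx'A : x' ω ∉ A := fun hc => hωA ((hPAx' ω).mp hc)
      have eA : restr Aᶜ x' ω = x' ω := restr_apply_mem hPAx'.compl (by simpa using hωA)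
      have eW : restr A w (x' ω) = x' ω := restr_apply_not_mem hPAw hx'A
      have eC1 : restr (A ∩ B)ᶜ x' ω = x' ω := restr_apply_mem hPCc (by simp [hωA])
      have eC2 : restr (A ∩ B) x (x' ω) = x' ω :=
        restr_apply_not_mem hPC (fun hc => hx'A hc.1)
      simp only [eA, eW, eC1, eC2]
  rw [← heq]
  exact huX

lemma splitAlong_factor {X Y : Set (Perm ℕ)} {A C : Set ℕ} (hC : SplitAlong X C)
    (hA : SplitAlong X A) (hCA : C ⊆ A) (hY : Y = restr A '' X) : SplitAlong Y C := by
  have presY : ∀ y ∈ Y, Pres C y := by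
    rintro y hy
    rw [hY] at hy
    obtain ⟨x, hx, rfl⟩ := hy
    have hPA : Pres A x := hA.1 x hx
    have hPCx : Pres C x := hC.1 x hx
    intro ω
    by_cases hω : ω ∈ A
    · rw [restr_apply_mem hPA hω]
      exact hPCx ω
    · rw [restr_apply_not_mem hPA hω]
  refine ⟨presY, ?_⟩
  rintro y hy y' hy'
  have hy0 := hy; have hy0' := hy'
  rw [hY] at hy0 hy0'
  obtain ⟨x, hx, hxy⟩ := hy0
  obtain ⟨x', hx', hxy'⟩ := hy0'
  set m := restr C x * restr Cᶜ x' with hm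
  have hmX : m ∈ X := hC.2 x hx x' hx'
  have hrA : restr A m ∈ Y := hY ▸ ⟨m, hmX, rfl⟩
  have heq : restr C y * restr Cᶜ y' = restr A m := by
    have hPAx : Pres A x := hA.1 x hx
    have hPAx' : Pres A x' := hA.1 x' hx'
    have hPCx : Pres C x := hC.1 x hx
    have hPCx' : Pres C x' := hC.1 x' hx'
    have hPAm : Pres A m := hA.1 m hmX
    have hPCy : Pres C y := presY y hy
    have hPCy' : Pres C y' := presY y' hy'
    ext ω
    show restr C y (restr Cᶜ y' ω) = restr A m ω
    have hmω : m ω = restr C x (restr Cᶜ x' ω) := rfl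
    by_cases hωC : ω ∈ C
    · have e1 : restr Cᶜ y' ω = ω := restr_apply_not_mem hPCy'.compl (by simpa using hωC)
      have e2 : restr C y ω = y ω := restr_apply_mem hPCy hωC
      have e3 : y ω = x ω := by rw [← hxy, restr_apply_mem hPAx (hCA hωC)]
      have e4 : restr A m ω = m ω := restr_apply_mem hPAm (hCA hωC)
      have e5 : restr Cᶜ x' ω = ω := restr_apply_not_mem hPCx'.compl (by simpa using hωC)
      have e6 : restr C x ω = x ω := restr_apply_mem hPCx hωC
      simp only [e1, e2, e3, e4, hmω, e5, e6]
    · have e1 : restr Cᶜ y' ω = y' ω := restr_apply_mem hPCy'.compl (by simpa using hωC)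
      have hy'C : y' ω ∉ C := fun hc => hωC ((hPCy' ω).mp hc)
      have e2 : restr C y (y' ω) = y' ω := restr_apply_not_mem hPCy hy'C
      by_cases hωA : ω ∈ A
      · have e3 : y' ω = x' ω := by rw [← hxy', restr_apply_mem hPAx' hωA]
        have e4 : restr A m ω = m ω := restr_apply_mem hPAm hωA
        have e5 : restr Cᶜ x' ω = x' ω := restr_apply_mem hPCx'.compl (by simpa using hωC)
        have hx'C : x' ω ∉ C := fun hc => hωC ((hPCx' ω).mp hc)
        have e6 : restr C x (x' ω) = x' ω := restr_apply_not_mem hPCx hx'C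
        have e7 : restr C y (x' ω) = x' ω := restr_apply_not_mem hPCy hx'C
        simp only [e1, e2, e3, e4, hmω, e5, e6, e7]
      · have e3 : y' ω = ω := by rw [← hxy', restr_apply_not_mem hPAx' hωA]
        have e4 : restr A m ω = ω := restr_apply_not_mem hPAm hωA
        have e5 : restr C y ω = ω := restr_apply_not_mem hPCy hωC
        simp only [e1, e2, e3, e4, e5]
  rw [heq]
  exact hrA

lemma ssupp_restr_image {X : Set (Perm ℕ)} {A : Set ℕ} (h : ∀ x ∈ X, Pres A x) :
    ssupp (restr A '' X) = ssupp X ∩ A := by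
  ext ω
  simp only [mem_ssupp, Set.mem_inter_iff, Set.mem_image]
  constructor
  · rintro ⟨y, ⟨x, hx, rfl⟩, hne⟩
    by_cases hω : ω ∈ A
    · rw [restr_apply_mem (h x hx) hω] at hne
      exact ⟨⟨x, hx, hne⟩, hω⟩
    · rw [restr_apply_not_mem (h x hx) hω] at hne
      exact absurd rfl hne
  · rintro ⟨⟨x, hx, hne⟩, hω⟩
    exact ⟨restr A x, ⟨x, hx, rfl⟩, by rwa [restr_apply_mem (h x hx) hω]⟩

lemma psupp_eq_empty_iff {x : Perm ℕ} : psupp x = ∅ ↔ x = 1 := by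
  constructor
  · intro h
    ext ω
    by_contra hne
    exact absurd (Set.eq_empty_iff_forall_notMem.mp h ω) (fun hc => hc hne)
  · intro h; rw [h]; ext ω; simp [psupp]

lemma ssupp_nonempty_of_memF {X : Set (Perm ℕ)} (h : memF X) : (ssupp X).Nonempty := by
  rw [Set.nonempty_iff_ne_empty]
  intro hc
  apply h.2.2.1
  apply Set.eq_singleton_iff_nonempty_unique_mem.mpr
  refine ⟨h.2.1, fun x hx => ?_⟩
  rw [← psupp_eq_empty_iff]
  apply Set.eq_empty_iff_forall_notMem.mpr
  intro ω hω
  have := psupp_subset_ssupp hx hω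
  rw [hc] at this
  exact this

lemma memF_restr_image {X : Set (Perm ℕ)} {A : Set ℕ} (hX : memF X)
    (hP : ∀ x ∈ X, Pres A x) (hne : (ssupp X ∩ A).Nonempty) : memF (restr A '' X) := by
  refine ⟨hX.1.image _, hX.2.1.image _, ?_, ?_⟩
  · intro hc
    have h1 : ssupp (restr A '' X) = ssupp X ∩ A := ssupp_restr_image hP
    rw [hc] at h1
    have : ssupp ({1} : Set (Perm ℕ)) = ∅ := by
      simp [ssupp, psupp_eq_empty_iff.mpr rfl]
    rw [this] at h1
    exact Set.not_nonempty_empty (h1 ▸ hne)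
  · rintro ρ ⟨x, hx, rfl⟩
    rw [psupp_restr (hP x hx)]
    exact (hX.2.2.2 x hx).inter_of_left A

lemma ssupp_mul_subset {U V : Set (Perm ℕ)} : ssupp (U * V) ⊆ ssupp U ∪ ssupp V := by
  intro ω hω
  obtain ⟨x, hx, hne⟩ := mem_ssupp.mp hω
  obtain ⟨u, hu, v, hv, rfl⟩ := Set.mem_mul.mp hx
  by_cases hvω : v ω = ω
  · left
    apply mem_ssupp.mpr ⟨u, hu, ?_⟩
    intro hc
    apply hne
    show u (v ω) = ω
    rw [hvω, hc]
  · right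
    exact mem_ssupp.mpr ⟨v, hv, hvω⟩

lemma ssupp_one : ssupp (1 : Set (Perm ℕ)) = ∅ := by
  apply Set.eq_empty_iff_forall_notMem.mpr
  intro ω hω
  obtain ⟨x, hx, hne⟩ := mem_ssupp.mp hω
  rw [Set.mem_one] at hx
  subst hx
  exact hne rfl

lemma ssupp_prod_subset {L : List (Set (Perm ℕ))} :
    ∀ ω ∈ ssupp L.prod, ∃ Z ∈ L, ω ∈ ssupp Z := by
  induction L with
  | nil =>
    intro ω hω
    rw [List.prod_nil, ssupp_one] at hω
    exact absurd hω (Set.notMem_empty ω)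
  | cons Y T ih =>
    intro ω hω
    rw [List.prod_cons] at hω
    rcases ssupp_mul_subset hω with h | h
    · exact ⟨Y, List.mem_cons_self, h⟩
    · obtain ⟨Z, hZ, hωZ⟩ := ih ω h
      exact ⟨Z, List.mem_cons_of_mem Y hZ, hωZ⟩

lemma prod_nonempty {L : List (Set (Perm ℕ))} (h : ∀ Y ∈ L, Y.Nonempty) :
    L.prod.Nonempty := by
  induction L with
  | nil => exact ⟨1, by rw [List.prod_nil]; exact Set.mem_one.mpr rfl⟩
  | cons Y T ih =>
    rw [List.prod_cons]
    exact (h Y List.mem_cons_self).mul (ih fun Z hZ => h Z (List.mem_cons_of_mem Y hZ))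

lemma commute_of_disjoint_ssupp {U V : Set (Perm ℕ)} (h : Disjoint (ssupp U) (ssupp V)) :
    Commute U V := by
  have key : ∀ u ∈ U, ∀ v ∈ V, u * v = v * u := by
    intro u hu v hv
    have hd : u.Disjoint v := by
      intro ω
      by_cases hω : u ω = ω
      · exact Or.inl hω
      · refine Or.inr ?_
        by_contra hc
        exact Set.disjoint_left.mp h (psupp_subset_ssupp hu hω) (psupp_subset_ssupp hv hc)
    exact hd.commute
  apply commute_iff_eq _ _ |>.mpr
  ext x
  simp only [Set.mem_mul]
  constructor
  · rintro ⟨u, hu, v, hv, rfl⟩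
    exact ⟨v, hv, u, hu, (key u hu v hv).symm⟩
  · rintro ⟨v, hv, u, hu, rfl⟩
    exact ⟨u, hu, v, hv, key u hu v hv⟩

lemma nodup_of_pairwise_disjoint {L : List (Set (Perm ℕ))} (hF : ∀ Y ∈ L, memF Y)
    (hd : L.Pairwise fun A B => Disjoint (ssupp A) (ssupp B)) : L.Nodup := by
  apply List.Pairwise.imp_of_mem ?_ hd
  intro A B hA _ hAB
  intro hc
  subst hc
  obtain ⟨ω, hω⟩ := ssupp_nonempty_of_memF (hF A hA)
  exact Set.disjoint_left.mp hAB hω hω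

lemma erase_decomp {L : List (Set (Perm ℕ))} (hF : ∀ Y ∈ L, memF Y)
    (hd : L.Pairwise fun A B => Disjoint (ssupp A) (ssupp B)) {Y : Set (Perm ℕ)}
    (hY : Y ∈ L) :
    L.prod = Y * (L.erase Y).prod ∧
      (∀ z ∈ (L.erase Y).prod, psupp z ⊆ (ssupp Y)ᶜ) ∧
      ((L.erase Y).prod).Nonempty := by
  have hnd := nodup_of_pairwise_disjoint hF hd
  have hperm := List.perm_cons_erase hY
  have hcomm : L.Pairwise Commute := hd.imp fun h => commute_of_disjoint_ssupp h
  have hprod : L.prod = Y * (L.erase Y).prod := by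
    rw [hperm.prod_eq' hcomm, List.prod_cons]
  have hdisjZ : ∀ Z ∈ L.erase Y, Disjoint (ssupp Y) (ssupp Z) := by
    intro Z hZ
    obtain ⟨hne, hZL⟩ := hnd.mem_erase_iff.mp hZ
    have := (haveI : Std.Symm fun A B : Set (Perm ℕ) => Disjoint (ssupp A) (ssupp B) := ⟨fun A B h => h.symm⟩; hd.forall hY hZL (fun hc => hne (hc.symm))) -- check arg order
    exact this
  refine ⟨hprod, ?_, prod_nonempty fun Z hZ => (hF Z (List.mem_of_mem_erase hZ)).2.1⟩
  intro z hz ω hω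
  intro hωY
  obtain ⟨Z, hZ, hωZ⟩ := ssupp_prod_subset ω (psupp_subset_ssupp hz hω)
  exact Set.disjoint_left.mp (hdisjZ Z hZ) hωY hωZ


lemma repr_of_mem {L : List (Set (Perm ℕ))} (hF : ∀ Y ∈ L, memF Y)
    (hd : L.Pairwise fun A B => Disjoint (ssupp A) (ssupp B)) {Y : Set (Perm ℕ)}
    (hY : Y ∈ L) :
    SplitAlong L.prod (ssupp Y) ∧ Y = restr (ssupp Y) '' L.prod ∧
      ssupp Y ⊆ ssupp L.prod := by
  obtain ⟨hprod, hsupp, hne⟩ := erase_decomp hF hd hY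
  have hYsub : ∀ y ∈ Y, psupp y ⊆ ssupp Y := fun y hy => psupp_subset_ssupp hy
  refine ⟨splitAlong_of_eq_mul hprod hYsub hsupp,
    left_eq_restr_image hprod hYsub hsupp hne, ?_⟩
  intro ω hω
  obtain ⟨y, hy, hyne⟩ := mem_ssupp.mp hω
  obtain ⟨z, hz⟩ := hne
  apply mem_ssupp.mpr
  refine ⟨y * z, hprod ▸ Set.mul_mem_mul hy hz, ?_⟩
  have hzω : z ω = ω := by
    by_contra hc
    exact (hsupp z hz hc) hω
  show y (z ω) ≠ ω
  rw [hzω]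
  exact hyne

lemma ssupp_subset_of_meet {X : Set (Perm ℕ)}
    {L₁ L₂ : List (Set (Perm ℕ))}
    (h₁ : ∀ Y ∈ L₁, IsIrred Y) (h₂ : ∀ Z ∈ L₂, IsIrred Z)
    (hd₁ : L₁.Pairwise fun A B => Disjoint (ssupp A) (ssupp B))
    (hd₂ : L₂.Pairwise fun A B => Disjoint (ssupp A) (ssupp B))
    (hp₁ : X = L₁.prod) (hp₂ : X = L₂.prod)
    {Y Z : Set (Perm ℕ)} (hY : Y ∈ L₁) (hZ : Z ∈ L₂)
    (hmeet : (ssupp Y ∩ ssupp Z).Nonempty) : ssupp Y ⊆ ssupp Z := by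
  have hF₁ : ∀ W ∈ L₁, memF W := fun W hW => (h₁ W hW).1
  have hF₂ : ∀ W ∈ L₂, memF W := fun W hW => (h₂ W hW).1
  obtain ⟨splitA, reprY, _⟩ := repr_of_mem hF₁ hd₁ hY
  obtain ⟨splitB, _, _⟩ := repr_of_mem hF₂ hd₂ hZ
  rw [← hp₁] at splitA reprY
  rw [← hp₂] at splitB
  by_contra hnc
  obtain ⟨a, haY, haZ⟩ := Set.not_subset.mp hnc
  set C := ssupp Y ∩ ssupp Z with hC
  have splitC : SplitAlong X C := splitAlong_inter splitA splitB
  have splitYC : SplitAlong Y C := splitAlong_factor splitC splitA Set.inter_subset_left reprY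
  have hYeq : Y = (restr C '' Y) * (restr Cᶜ '' Y) := eq_mul_restr splitYC
  have hmemFY : memF Y := hF₁ Y hY
  have hU : memF (restr C '' Y) := by
    apply memF_restr_image hmemFY splitYC.1
    obtain ⟨ω, hω⟩ := hmeet
    exact ⟨ω, ⟨hω.1, hω⟩⟩
  have hV : memF (restr Cᶜ '' Y) := by
    apply memF_restr_image hmemFY (fun y hy => (splitYC.1 y hy).compl)
    exact ⟨a, ⟨haY, fun hc => haZ hc.2⟩⟩
  have hdisj : Disjoint (ssupp (restr C '' Y)) (ssupp (restr Cᶜ '' Y)) := by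
    rw [ssupp_restr_image splitYC.1, ssupp_restr_image (fun y hy => (splitYC.1 y hy).compl)]
    apply Set.disjoint_left.mpr
    rintro ω ⟨_, hω1⟩ ⟨_, hω2⟩
    exact hω2 hω1
  exact (h₁ Y hY).2 _ _ hU hV hdisj hYeq

lemma mem_of_decomps {X : Set (Perm ℕ)}
    {L₁ L₂ : List (Set (Perm ℕ))}
    (h₁ : ∀ Y ∈ L₁, IsIrred Y) (h₂ : ∀ Z ∈ L₂, IsIrred Z)
    (hd₁ : L₁.Pairwise fun A B => Disjoint (ssupp A) (ssupp B))
    (hd₂ : L₂.Pairwise fun A B => Disjoint (ssupp A) (ssupp B))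
    (hp₁ : X = L₁.prod) (hp₂ : X = L₂.prod)
    {Y : Set (Perm ℕ)} (hY : Y ∈ L₁) : Y ∈ L₂ := by
  have hF₁ : ∀ W ∈ L₁, memF W := fun W hW => (h₁ W hW).1
  have hF₂ : ∀ W ∈ L₂, memF W := fun W hW => (h₂ W hW).1
  obtain ⟨_, reprY, subY⟩ := repr_of_mem hF₁ hd₁ hY
  rw [← hp₁] at reprY subY
  obtain ⟨ω, hω⟩ := ssupp_nonempty_of_memF (hF₁ Y hY)
  have hωX : ω ∈ ssupp X := subY hω
  obtain ⟨Z, hZ, hωZ⟩ := ssupp_prod_subset ω (hp₂ ▸ hωX)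
  have hYZ : ssupp Y ⊆ ssupp Z :=
    ssupp_subset_of_meet h₁ h₂ hd₁ hd₂ hp₁ hp₂ hY hZ ⟨ω, hω, hωZ⟩
  obtain ⟨Y', hY', hωY'⟩ := ssupp_prod_subset ω (hp₁ ▸ hωX)
  have hZY' : ssupp Z ⊆ ssupp Y' :=
    ssupp_subset_of_meet h₂ h₁ hd₂ hd₁ hp₂ hp₁ hZ hY' ⟨ω, hωZ, hωY'⟩
  have hYY' : Y = Y' := by
    by_contra hne
    have hdisj := (haveI : Std.Symm fun A B : Set (Perm ℕ) => Disjoint (ssupp A) (ssupp B) := ⟨fun A B h => h.symm⟩; hd₁.forall hY hY' hne)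
    exact Set.disjoint_left.mp hdisj hω hωY'
  subst hYY'
  have hBA : ssupp Z ⊆ ssupp Y := hZY'
  have hAB : ssupp Y = ssupp Z := le_antisymm hYZ hBA
  obtain ⟨_, reprZ, _⟩ := repr_of_mem hF₂ hd₂ hZ
  rw [← hp₂] at reprZ
  have : Y = Z := by rw [reprY, reprZ, hAB]
  rw [this]
  exact hZ


/-- **Uniqueness of irreducible decomposition.**
If `X ∈ 𝓕` admits two decompositions into irreducible members of `𝓕` with pairwise
disjoint supports, then the two lists of factors agree up to reordering
(in particular they have the same length). -/
theorem stmt_2 (X : Set (Equiv.Perm ℕ)) (hX : memF X)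
    (L₁ L₂ : List (Set (Equiv.Perm ℕ)))
    (h₁ : ∀ Y ∈ L₁, IsIrred Y) (h₂ : ∀ Z ∈ L₂, IsIrred Z)
    (hd₁ : L₁.Pairwise fun A B => Disjoint (ssupp A) (ssupp B))
    (hd₂ : L₂.Pairwise fun A B => Disjoint (ssupp A) (ssupp B))
    (hp₁ : X = L₁.prod) (hp₂ : X = L₂.prod) :
    L₁.Perm L₂ := by
  have hF₁ : ∀ W ∈ L₁, memF W := fun W hW => (h₁ W hW).1
  have hF₂ : ∀ W ∈ L₂, memF W := fun W hW => (h₂ W hW).1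
  apply (List.perm_ext_iff_of_nodup (nodup_of_pairwise_disjoint hF₁ hd₁)
    (nodup_of_pairwise_disjoint hF₂ hd₂)).mpr
  intro Y
  exact ⟨fun hY => mem_of_decomps h₁ h₂ hd₁ hd₂ hp₁ hp₂ hY,
    fun hY => mem_of_decomps h₂ h₁ hd₂ hd₁ hp₂ hp₁ hY⟩

end FPS
end

section
/- Let X_1, X_2, …, X_t ∈ 𝓢^q be exact, with pairwise disjoint supports, and set X = X_1 * X_2 * ⋯ * X_t. Choose Sylow p-subgroups Q_i of S_{X_i} and a Sylow p-subgroup Q_X of S_X containing Q_1 × Q_2 × ⋯ × Q_t. Then c(X) ⊆ c(X_1) * c(X_2) * ⋯ * c(X_t), i.e. C_{G_X}(Q_X) ∩ Ξ_X is contained in the product of the sets C_{G_{X_i}}(Q_i) ∩ Ξ_{X_i}. -/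
open Equiv Pointwise

namespace FPS

/-! ### Auxiliary lemmas for `stmt_6` -/

lemma apply_mem_psupp_iff (σ : Equiv.Perm ℕ) (ω : ℕ) : σ ω ∈ psupp σ ↔ ω ∈ psupp σ := by
  simp only [psupp, Set.mem_setOf_eq, ne_eq]
  exact not_congr (EquivLike.apply_eq_iff_eq σ)

lemma psupp_inv (σ : Equiv.Perm ℕ) : psupp σ⁻¹ = psupp σ := by
  ext ω
  simp only [psupp, Set.mem_setOf_eq, ne_eq]
  have key : σ⁻¹ ω = ω ↔ σ ω = ω := by
    constructor
    · intro h
      nth_rewrite 1 [← h]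
      exact Equiv.apply_symm_apply σ ω
    · intro h
      nth_rewrite 1 [← h]
      exact Equiv.symm_apply_apply σ ω
  exact not_congr key

lemma mem_of_psupp_subset {σ : Equiv.Perm ℕ} {A : Set ℕ} (h : psupp σ ⊆ A) {ω : ℕ}
    (hω : ω ∈ A) : σ ω ∈ A := by
  by_cases hs : ω ∈ psupp σ
  · exact h ((apply_mem_psupp_iff σ ω).mpr hs)
  · have : σ ω = ω := not_not.mp hs
    rw [this]; exact hω

lemma iff_of_psupp_subset {σ : Equiv.Perm ℕ} {A : Set ℕ} (h : psupp σ ⊆ A) :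
    ∀ ω, ω ∈ A ↔ σ ω ∈ A := by
  intro ω
  constructor
  · exact fun hω => mem_of_psupp_subset h hω
  · intro hσ
    by_contra hω
    have hfix : σ ω = ω := not_not.mp (fun hs => hω (h hs))
    rw [hfix] at hσ
    exact hω hσ

lemma mem_symOn {g : Equiv.Perm ℕ} {S : Set ℕ} : g ∈ symOn S ↔ ∀ ω, ω ∉ S → g ω = ω :=
  Iff.rfl

lemma symOn_apply_mem {g : Equiv.Perm ℕ} {S : Set ℕ} (hg : g ∈ symOn S) {ω : ℕ} :
    ω ∈ S ↔ g ω ∈ S := by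
  constructor
  · intro hω
    by_contra hgω
    have h2 : g (g ω) = g ω := mem_symOn.mp hg (g ω) hgω
    have h3 : g ω = ω := g.injective h2
    rw [h3] at hgω
    exact hgω hω
  · intro hgω
    by_contra hω
    rw [mem_symOn.mp hg ω hω] at hgω
    exact hω hgω

lemma zpow_agree {u v : Equiv.Perm ℕ} {A : Set ℕ}
    (hu : ∀ ω ∈ A, u ω ∈ A) (hu' : ∀ ω ∈ A, u⁻¹ ω ∈ A)
    (huv : ∀ ω ∈ A, u ω = v ω) :
    ∀ n : ℤ, ∀ ω ∈ A, (u ^ n) ω = (v ^ n) ω ∧ (u ^ n) ω ∈ A := by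
  have hv' : ∀ ω ∈ A, v⁻¹ ω = u⁻¹ ω := by
    intro ω hω
    have h1 : v (u⁻¹ ω) = ω := by
      rw [← huv _ (hu' ω hω), ← Equiv.Perm.mul_apply, mul_inv_cancel, Equiv.Perm.one_apply]
    calc v⁻¹ ω = v⁻¹ (v (u⁻¹ ω)) := by rw [h1]
      _ = u⁻¹ ω := Equiv.symm_apply_apply v _
  intro n
  induction n using Int.induction_on with
  | zero => intro ω hω; exact ⟨rfl, hω⟩
  | succ k ih =>
    intro ω hω
    have h1 : (u ^ ((k : ℤ) + 1)) ω = (u ^ (k : ℤ)) (u ω) := by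
      rw [zpow_add_one]; rfl
    have h2 : (v ^ ((k : ℤ) + 1)) ω = (v ^ (k : ℤ)) (v ω) := by
      rw [zpow_add_one]; rfl
    obtain ⟨e, m⟩ := ih (u ω) (hu ω hω)
    refine ⟨?_, by rwa [h1]⟩
    rw [h1, h2, ← huv ω hω, e]
  | pred k ih =>
    intro ω hω
    have h1 : (u ^ (-(k : ℤ) - 1)) ω = (u ^ (-(k : ℤ))) (u⁻¹ ω) := by
      rw [zpow_sub_one]; rfl
    have h2 : (v ^ (-(k : ℤ) - 1)) ω = (v ^ (-(k : ℤ))) (v⁻¹ ω) := by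
      rw [zpow_sub_one]; rfl
    obtain ⟨e, m⟩ := ih (u⁻¹ ω) (hu' ω hω)
    refine ⟨?_, by rwa [h1]⟩
    rw [h1, h2, hv' ω hω, e]

lemma listprod_apply_fixed : ∀ (l : List (Equiv.Perm ℕ)) (ω : ℕ),
    (∀ σ ∈ l, σ ω = ω) → l.prod ω = ω
  | [], _, _ => rfl
  | a :: l, ω, h => by
    rw [List.prod_cons, Equiv.Perm.mul_apply,
      listprod_apply_fixed l ω (fun σ hσ => h σ (List.mem_cons_of_mem a hσ))]
    exact h a (List.mem_cons_self)

lemma ofFn_prod_apply : ∀ {t : ℕ} (f : Fin t → Equiv.Perm ℕ) (j : Fin t) (ω : ℕ),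
    (∀ i, i ≠ j → f i ω = ω) → (∀ i, i ≠ j → f i (f j ω) = f j ω) →
    (List.ofFn f).prod ω = f j ω := by
  intro t
  induction t with
  | zero => exact fun _ j => j.elim0
  | succ n ih =>
    intro f j ω h1 h2
    rw [List.ofFn_succ, List.prod_cons, Equiv.Perm.mul_apply]
    rcases Fin.eq_zero_or_eq_succ j with hj | ⟨j', rfl⟩
    · subst hj
      rw [listprod_apply_fixed _ ω ?_]
      intro σ hσ
      obtain ⟨i, rfl⟩ := List.mem_ofFn.mp hσ
      exact h1 i.succ (Fin.succ_ne_zero i)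
    · rw [ih (fun i => f i.succ) j' ω ?_ ?_]
      · exact h2 0 (Fin.succ_ne_zero j').symm
      · intro i hi
        exact h1 i.succ (fun hc => hi (Fin.succ_injective n hc))
      · intro i hi
        exact h2 i.succ (fun hc => hi (Fin.succ_injective n hc))

lemma exists_of_mem_ofFn_prod : ∀ {t : ℕ} (S : Fin t → Set (Equiv.Perm ℕ)) (z : Equiv.Perm ℕ),
    z ∈ (List.ofFn S).prod →
      ∃ f : Fin t → Equiv.Perm ℕ, (∀ i, f i ∈ S i) ∧ z = (List.ofFn f).prod := by
  intro t
  induction t with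
  | zero =>
    intro S z hz
    refine ⟨fun i => i.elim0, fun i => i.elim0, ?_⟩
    simp only [List.ofFn_zero, List.prod_nil] at hz ⊢
    simpa using hz
  | succ n ih =>
    intro S z hz
    rw [List.ofFn_succ, List.prod_cons, Set.mem_mul] at hz
    obtain ⟨a, ha, b, hb, rfl⟩ := hz
    obtain ⟨f', hf', rfl⟩ := ih _ b hb
    refine ⟨Fin.cons a f', ?_, ?_⟩
    · intro i
      refine Fin.cases ?_ ?_ i
      · simpa using ha
      · intro i'; simpa using hf' i'
    · rw [List.ofFn_succ, List.prod_cons]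
      simp

lemma ofFn_prod_mem_prod : ∀ {t : ℕ} (S : Fin t → Set (Equiv.Perm ℕ))
    (f : Fin t → Equiv.Perm ℕ), (∀ i, f i ∈ S i) →
    (List.ofFn f).prod ∈ (List.ofFn S).prod := by
  intro t
  induction t with
  | zero =>
    intro S f _
    simp only [List.ofFn_zero, List.prod_nil]
    exact Set.mem_one.mpr rfl
  | succ n ih =>
    intro S f h
    simp only [List.ofFn_succ, List.prod_cons]
    exact Set.mul_mem_mul (h 0) (ih _ _ fun i => h i.succ)

lemma ofFn_prod_apply_mem {t : ℕ} (A : Fin t → Set ℕ) (f : Fin t → Equiv.Perm ℕ)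
    (hf : ∀ i, psupp (f i) = A i)
    (hd : ∀ i j, i ≠ j → Disjoint (A i) (A j)) {i : Fin t} {ω : ℕ} (hω : ω ∈ A i) :
    (List.ofFn f).prod ω = f i ω := by
  apply ofFn_prod_apply f i ω
  · intro k hk
    by_contra hc
    have hm : ω ∈ psupp (f k) := hc
    rw [hf k] at hm
    exact Set.disjoint_left.mp (hd k i hk) hm hω
  · intro k hk
    by_contra hc
    have h1 : f i ω ∈ A i := mem_of_psupp_subset (le_of_eq (hf i)) hω
    have hm : f i ω ∈ psupp (f k) := hc
    rw [hf k] at hm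
    exact Set.disjoint_left.mp (hd k i hk) hm h1

lemma ofFn_prod_apply_not_mem {t : ℕ} (A : Fin t → Set ℕ) (f : Fin t → Equiv.Perm ℕ)
    (hf : ∀ i, psupp (f i) = A i) {ω : ℕ} (hω : ω ∉ ⋃ i, A i) :
    (List.ofFn f).prod ω = ω := by
  apply listprod_apply_fixed
  intro σ hσ
  obtain ⟨k, rfl⟩ := List.mem_ofFn.mp hσ
  by_contra hc
  have hm : ω ∈ psupp (f k) := hc
  rw [hf k] at hm
  exact hω (Set.mem_iUnion.mpr ⟨k, hm⟩)

lemma psupp_ofFn_prod {t : ℕ} (A : Fin t → Set ℕ) (f : Fin t → Equiv.Perm ℕ)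
    (hf : ∀ i, psupp (f i) = A i)
    (hd : ∀ i j, i ≠ j → Disjoint (A i) (A j)) :
    psupp ((List.ofFn f).prod) = ⋃ i, A i := by
  ext ω
  constructor
  · intro h
    by_contra hc
    exact h (ofFn_prod_apply_not_mem A f hf hc)
  · intro h
    obtain ⟨i, hi⟩ := Set.mem_iUnion.mp h
    have h1 : (List.ofFn f).prod ω = f i ω := ofFn_prod_apply_mem A f hf hd hi
    have h2 : ω ∈ psupp (f i) := by rw [hf i]; exact hi
    show (List.ofFn f).prod ω ≠ ω
    rw [h1]; exact h2

lemma cycleType_replicate {β : Type} [Fintype β] [DecidableEq β] {q : ℕ} (hq : 2 ≤ q)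
    (ρ : Equiv.Perm β) (h : ∀ b : β, (Set.range fun n : ℤ => (ρ ^ n) b).ncard = q) :
    ρ.cycleType = Multiset.replicate (Fintype.card β / q) q := by
  have hnf : ∀ b : β, ρ b ≠ b := by
    intro b hb
    have h1 : (Set.range fun n : ℤ => (ρ ^ n) b) = {b} := by
      apply Set.eq_singleton_iff_unique_mem.mpr
      constructor
      · exact ⟨0, rfl⟩
      · rintro y ⟨n, rfl⟩
        exact Equiv.Perm.zpow_apply_eq_self_of_apply_eq_self hb n
    have h2 := h b
    rw [h1, Set.ncard_singleton] at h2
    omega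
  have hsupp : ρ.support = Finset.univ := by
    ext b; simp [Equiv.Perm.mem_support, hnf b]
  have hall : ∀ c ∈ ρ.cycleType, c = q := by
    intro c hc
    rw [Equiv.Perm.cycleType_def, Multiset.mem_map] at hc
    obtain ⟨f, hf, rfl⟩ := hc
    rw [Finset.mem_val] at hf
    have hfc : f.IsCycle := (Equiv.Perm.mem_cycleFactorsFinset_iff.mp hf).1
    obtain ⟨a, ha, -⟩ := hfc
    have haf : a ∈ f.support := Equiv.Perm.mem_support.mpr ha
    have hfeq : f = ρ.cycleOf a := Equiv.Perm.cycle_is_cycleOf haf hf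
    have haρ : a ∈ ρ.support := hsupp ▸ Finset.mem_univ a
    have hset : (f.support : Set β) = Set.range fun n : ℤ => (ρ ^ n) a := by
      ext b
      rw [Finset.mem_coe, hfeq, Equiv.Perm.mem_support_cycleOf_iff]
      constructor
      · rintro ⟨⟨n, hn⟩, -⟩; exact ⟨n, hn⟩
      · rintro ⟨n, hn⟩; exact ⟨⟨n, hn⟩, haρ⟩
    have hcard : ((f.support : Set β)).ncard = q := by rw [hset]; exact h a
    rw [Set.ncard_coe_finset] at hcard
    simpa using hcard
  have hrep : ρ.cycleType = Multiset.replicate (Multiset.card ρ.cycleType) q :=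
    Multiset.eq_replicate_card.mpr hall
  have hsum : Multiset.card ρ.cycleType * q = Fintype.card β := by
    have h1 := Equiv.Perm.sum_cycleType ρ
    rw [hrep] at h1
    rw [Multiset.sum_replicate, smul_eq_mul] at h1
    rw [h1, hsupp, Finset.card_univ]
  have hn : Multiset.card ρ.cycleType = Fintype.card β / q := by
    rw [← hsum, Nat.mul_div_cancel _ (by omega : 0 < q)]
  rw [hrep, hn]

lemma isConj_of_orbits {β : Type} [Fintype β] [DecidableEq β] {q : ℕ} (hq : 2 ≤ q)
    {σ τ : Equiv.Perm β}
    (hσ : ∀ b : β, (Set.range fun n : ℤ => (σ ^ n) b).ncard = q)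
    (hτ : ∀ b : β, (Set.range fun n : ℤ => (τ ^ n) b).ncard = q) : IsConj σ τ :=
  Equiv.Perm.isConj_of_cycleType_eq
    ((cycleType_replicate hq σ hσ).trans (cycleType_replicate hq τ hτ).symm)


/-- **Submultiplicativity of closure.** Let `X₁, …, X_t ∈ 𝓢^q` be exact with pairwise
disjoint supports and let `X = X₁ * ⋯ * X_t`. For Sylow `p`-subgroups `Qᵢ` of `S_{Xᵢ}`
and a Sylow `p`-subgroup `Q_X` of `S_X` containing `Q₁ × ⋯ × Q_t`, we have
`c(X) ⊆ c(X₁) * ⋯ * c(X_t)`. -/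
theorem stmt_6 (p q : ℕ) (hp : p.Prime) (hq : 2 ≤ q) (t : ℕ) (ht : 1 ≤ t)
    (Xs : Fin t → Set (Equiv.Perm ℕ)) (hXs : ∀ i, memS q (Xs i))
    (hdisj : ∀ i j, i ≠ j → Disjoint (ssupp (Xs i)) (ssupp (Xs j)))
    (hexact : ∀ i, IsExactSet p (Xs i))
    (Q : Fin t → Subgroup (Equiv.Perm ℕ)) (hQ : ∀ i, IsSylowOf p (Q i) (SX (Xs i)))
    (QX : Subgroup (Equiv.Perm ℕ)) (hQX : IsSylowOf p QX (SX ((List.ofFn Xs).prod)))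
    (hle : (⨆ i, Q i) ≤ QX) :
    (Subgroup.centralizer (QX : Set (Equiv.Perm ℕ)) : Set (Equiv.Perm ℕ)) ∩
        Xi ((List.ofFn Xs).prod) ⊆
      (List.ofFn fun i =>
        (Subgroup.centralizer ((Q i : Subgroup (Equiv.Perm ℕ)) : Set (Equiv.Perm ℕ)) :
          Set (Equiv.Perm ℕ)) ∩ Xi (Xs i)).prod := by
  classical
  intro z hz
  obtain ⟨hzc, hzXi⟩ := hz
  rw [Xi, Set.mem_iUnion₂] at hzXi
  obtain ⟨g, hg, hzg⟩ := hzXi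
  rw [conjSet, Set.mem_image] at hzg
  obtain ⟨x, hxX, hzx⟩ := hzg
  have hg' : g ∈ symOn (ssupp ((List.ofFn Xs).prod)) := hg
  obtain ⟨xs, hxs, hxeq⟩ := exists_of_mem_ofFn_prod Xs x hxX
  -- basic facts about the pieces
  have hpsupp : ∀ i, ∀ ρ ∈ Xs i, psupp ρ = ssupp (Xs i) := fun i => (hXs i).2.1
  have hxsupp : ∀ i, psupp (xs i) = ssupp (Xs i) := fun i => hpsupp i _ (hxs i)
  have hAfin : ∀ i, (ssupp (Xs i)).Finite := by
    intro i
    obtain ⟨ρ, hρ⟩ := (hXs i).1.2.1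
    rw [← hpsupp i ρ hρ]
    exact (hXs i).1.2.2.2 ρ hρ
  -- support of x and of the whole product set
  have hpsuppx : psupp x = ⋃ i, ssupp (Xs i) := by
    rw [hxeq]
    exact psupp_ofFn_prod _ xs hxsupp hdisj
  have hssuppX : ssupp ((List.ofFn Xs).prod) = ⋃ i, ssupp (Xs i) := by
    apply Set.Subset.antisymm
    · intro ω hω
      rw [ssupp, Set.mem_iUnion₂] at hω
      obtain ⟨ρ, hρ, hωρ⟩ := hω
      obtain ⟨fs, hfs, rfl⟩ := exists_of_mem_ofFn_prod Xs ρ hρ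
      rwa [psupp_ofFn_prod _ fs (fun i => hpsupp i _ (hfs i)) hdisj] at hωρ
    · intro ω hω
      rw [ssupp, Set.mem_iUnion₂]
      exact ⟨x, hxX, by rw [hpsuppx]; exact hω⟩
  have hgU : ∀ ω, ω ∈ (⋃ i, ssupp (Xs i)) ↔ g ω ∈ (⋃ i, ssupp (Xs i)) := by
    intro ω
    rw [← hssuppX]
    exact symOn_apply_mem hg'
  have hzapp : ∀ ω, z ω = g⁻¹ (x (g ω)) := by
    intro ω
    rw [← hzx]
    rfl
  have hpsuppz : psupp z = ⋃ i, ssupp (Xs i) := by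
    ext ω
    show z ω ≠ ω ↔ _
    rw [hzapp ω]
    constructor
    · intro h
      have h1 : x (g ω) ≠ g ω := by
        intro hc
        exact h (by rw [hc, ← Equiv.Perm.mul_apply, inv_mul_cancel, Equiv.Perm.one_apply])
      have h2 : g ω ∈ (⋃ i, ssupp (Xs i)) := by rw [← hpsuppx]; exact h1
      exact (hgU ω).mpr h2
    · intro h hc
      have h1 : g ω ∈ psupp x := by rw [hpsuppx]; exact (hgU ω).mp h
      apply h1
      have h2 := congrArg g hc
      rwa [← Equiv.Perm.mul_apply, mul_inv_cancel, Equiv.Perm.one_apply] at h2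
  -- z and z⁻¹ preserve each ssupp (Xs i)
  have hzc0 : z ∈ Subgroup.centralizer (QX : Set (Equiv.Perm ℕ)) := hzc
  have hcentmem : ∀ w : Equiv.Perm ℕ, w ∈ Subgroup.centralizer (QX : Set (Equiv.Perm ℕ)) →
      ∀ i, ∀ ω ∈ ssupp (Xs i), w ω ∈ ssupp (Xs i) := by
    intro w hw i ω hω
    rw [← hexact i (Q i) (hQ i)] at hω ⊢
    rw [ssupp, Set.mem_iUnion₂] at hω ⊢
    obtain ⟨ρ, hρ, hωρ⟩ := hω
    refine ⟨ρ, hρ, ?_⟩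
    have hρQX : ρ ∈ QX := hle (le_iSup Q i hρ)
    have hco := Subgroup.mem_centralizer_iff.mp hw ρ hρQX
    have hcomm : ρ (w ω) = w (ρ ω) := by
      rw [← Equiv.Perm.mul_apply, hco, Equiv.Perm.mul_apply]
    show ρ (w ω) ≠ w ω
    rw [hcomm]
    exact fun hc => hωρ (w.injective hc)
  have hzA : ∀ i, ∀ ω ∈ ssupp (Xs i), z ω ∈ ssupp (Xs i) := hcentmem z hzc0
  have hzA' : ∀ i, ∀ ω ∈ ssupp (Xs i), z⁻¹ ω ∈ ssupp (Xs i) :=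
    hcentmem z⁻¹ ((Subgroup.centralizer _).inv_mem hzc0)
  have hziff : ∀ i, ∀ ω, ω ∈ ssupp (Xs i) ↔ z ω ∈ ssupp (Xs i) := by
    intro i ω
    refine ⟨hzA i ω, fun h => ?_⟩
    have := hzA' i _ h
    rwa [← Equiv.Perm.mul_apply, inv_mul_cancel, Equiv.Perm.one_apply] at this
  -- the pieces of z
  set ζ : Fin t → Equiv.Perm ℕ := fun i => Equiv.Perm.ofSubtype (z.subtypePerm (fun ω => (hziff i ω).symm))
    with hζdef
  have hζmem : ∀ i, ∀ ω ∈ ssupp (Xs i), ζ i ω = z ω := by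
    intro i ω hω
    show Equiv.Perm.ofSubtype (z.subtypePerm (fun ω => (hziff i ω).symm)) ω = z ω
    rw [Equiv.Perm.ofSubtype_apply_of_mem _ hω]
    rfl
  have hζnot : ∀ i, ∀ ω, ω ∉ ssupp (Xs i) → ζ i ω = ω := by
    intro i ω hω
    exact Equiv.Perm.ofSubtype_apply_of_not_mem _ hω
  have hζpsupp : ∀ i, psupp (ζ i) = ssupp (Xs i) := by
    intro i
    ext ω
    constructor
    · intro h
      by_contra hc
      exact h (hζnot i ω hc)
    · intro h
      show ζ i ω ≠ ω
      rw [hζmem i ω h]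
      have : ω ∈ psupp z := by rw [hpsuppz]; exact Set.mem_iUnion.mpr ⟨i, h⟩
      exact this
  have hzeq : z = (List.ofFn ζ).prod := by
    apply Equiv.ext
    intro ω
    by_cases hω : ω ∈ (⋃ i, ssupp (Xs i))
    · obtain ⟨i, hi⟩ := Set.mem_iUnion.mp hω
      rw [ofFn_prod_apply_mem _ ζ hζpsupp hdisj hi, hζmem i ω hi]
    · rw [ofFn_prod_apply_not_mem _ ζ hζpsupp hω]
      have : ω ∉ psupp z := by rw [hpsuppz]; exact hω
      exact not_not.mp this
  -- orbit sizes
  have horbx : ∀ j, ∀ ω ∈ ssupp (Xs j),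
      (Set.range fun n : ℤ => ((xs j) ^ n) ω).ncard = q := by
    intro j ω hω
    exact (hXs j).2.2 (xs j) (hxs j) ω (by rw [hxsupp j]; exact hω)
  have hxap : ∀ j, ∀ ω ∈ ssupp (Xs j), x ω = xs j ω := by
    intro j ω hω
    rw [hxeq]
    exact ofFn_prod_apply_mem _ xs hxsupp hdisj hω
  have horbz : ∀ ω ∈ (⋃ i, ssupp (Xs i)),
      (Set.range fun n : ℤ => (z ^ n) ω).ncard = q := by
    intro ω hω
    have hgω : g ω ∈ (⋃ i, ssupp (Xs i)) := (hgU ω).mp hω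
    obtain ⟨j, hj⟩ := Set.mem_iUnion.mp hgω
    have hxj1 : ∀ ω' ∈ ssupp (Xs j), xs j ω' ∈ ssupp (Xs j) := fun ω' h' =>
      mem_of_psupp_subset (le_of_eq (hxsupp j)) h'
    have hxj2 : ∀ ω' ∈ ssupp (Xs j), (xs j)⁻¹ ω' ∈ ssupp (Xs j) := fun ω' h' =>
      mem_of_psupp_subset (le_of_eq ((psupp_inv (xs j)).trans (hxsupp j))) h'
    have hagree := zpow_agree hxj1 hxj2 (fun ω' h' => (hxap j ω' h').symm)
    have hzn : ∀ n : ℤ, (z ^ n) ω = g⁻¹ ((x ^ n) (g ω)) := by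
      intro n
      have h1 : z = g⁻¹ * x * g := by rw [← hzx]; rfl
      have h2 : z ^ n = g⁻¹ * x ^ n * g := by
        rw [h1]
        calc (g⁻¹ * x * g) ^ n = (g⁻¹ * x * g⁻¹⁻¹) ^ n := by rw [inv_inv]
          _ = g⁻¹ * x ^ n * g⁻¹⁻¹ := conj_zpow
          _ = g⁻¹ * x ^ n * g := by rw [inv_inv]
      rw [h2]
      rfl
    have hfun1 : (fun n : ℤ => (z ^ n) ω) =
        (fun a => (g⁻¹ : Equiv.Perm ℕ) a) ∘ (fun n : ℤ => (x ^ n) (g ω)) :=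
      funext fun n => hzn n
    have hr1 : (Set.range fun n : ℤ => (z ^ n) ω) =
        (fun a => (g⁻¹ : Equiv.Perm ℕ) a) '' (Set.range fun n : ℤ => (x ^ n) (g ω)) := by
      rw [hfun1, Set.range_comp]
    have hr2 : (Set.range fun n : ℤ => (x ^ n) (g ω)) =
        Set.range fun n : ℤ => ((xs j) ^ n) (g ω) :=
      congrArg Set.range (funext fun n => ((hagree n (g ω) hj).1).symm)
    rw [hr1, Set.ncard_image_of_injective _ (Equiv.injective _), hr2]
    exact horbx j (g ω) hj
  have horbζ : ∀ i, ∀ ω ∈ ssupp (Xs i),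
      (Set.range fun n : ℤ => ((ζ i) ^ n) ω).ncard = q := by
    intro i ω hω
    have hζ1 : ∀ ω' ∈ ssupp (Xs i), ζ i ω' ∈ ssupp (Xs i) := fun ω' h' =>
      mem_of_psupp_subset (le_of_eq (hζpsupp i)) h'
    have hζ2 : ∀ ω' ∈ ssupp (Xs i), (ζ i)⁻¹ ω' ∈ ssupp (Xs i) := fun ω' h' =>
      mem_of_psupp_subset (le_of_eq ((psupp_inv (ζ i)).trans (hζpsupp i))) h'
    have hagree := zpow_agree hζ1 hζ2 (hζmem i)
    have hr : (Set.range fun n : ℤ => ((ζ i) ^ n) ω) =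
        Set.range fun n : ℤ => (z ^ n) ω :=
      congrArg Set.range (funext fun n => (hagree n ω hω).1)
    rw [hr]
    exact horbz ω (Set.mem_iUnion.mpr ⟨i, hω⟩)
  -- each piece centralizes Q i
  have hcent_i : ∀ i, ζ i ∈ Subgroup.centralizer ((Q i : Subgroup (Equiv.Perm ℕ)) :
      Set (Equiv.Perm ℕ)) := by
    intro i
    rw [Subgroup.mem_centralizer_iff]
    intro ρ hρ
    have hρQ : ρ ∈ Q i := hρ
    have hρsupp : psupp ρ ⊆ ssupp (Xs i) := by
      rw [← hexact i (Q i) (hQ i)]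
      exact fun ω' hω' => Set.mem_iUnion₂.mpr ⟨ρ, hρQ, hω'⟩
    apply Equiv.ext
    intro ω
    rw [Equiv.Perm.mul_apply, Equiv.Perm.mul_apply]
    by_cases hω : ω ∈ ssupp (Xs i)
    · have h1 : ρ ω ∈ ssupp (Xs i) := mem_of_psupp_subset hρsupp hω
      rw [hζmem i ω hω, hζmem i (ρ ω) h1]
      have hρQX : ρ ∈ QX := hle (le_iSup Q i hρQ)
      have hco := Subgroup.mem_centralizer_iff.mp hzc0 ρ hρQX
      rw [← Equiv.Perm.mul_apply, hco, Equiv.Perm.mul_apply]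
    · have h0 : ρ ω = ω := by
        by_contra hc
        exact hω (hρsupp hc)
      rw [hζnot i ω hω, h0, hζnot i ω hω]
  -- each piece lies in Ξ_{X_i}
  have hXi_i : ∀ i, ζ i ∈ Xi (Xs i) := by
    intro i
    haveI : Fintype {ω // ω ∈ ssupp (Xs i)} := (hAfin i).fintype
    have hxiff : ∀ ω, xs i ω ∈ ssupp (Xs i) ↔ ω ∈ ssupp (Xs i) :=
      fun ω => (iff_of_psupp_subset (le_of_eq (hxsupp i)) ω).symm
    have hζiff : ∀ ω, ζ i ω ∈ ssupp (Xs i) ↔ ω ∈ ssupp (Xs i) :=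
      fun ω => (iff_of_psupp_subset (le_of_eq (hζpsupp i)) ω).symm
    have htransfer : ∀ (u : Equiv.Perm ℕ)
        (hiff : ∀ ω, u ω ∈ ssupp (Xs i) ↔ ω ∈ ssupp (Xs i)),
        (∀ ω ∈ ssupp (Xs i), (Set.range fun n : ℤ => (u ^ n) ω).ncard = q) →
        ∀ b : {ω // ω ∈ ssupp (Xs i)},
          (Set.range fun n : ℤ => ((u.subtypePerm hiff) ^ n) b).ncard = q := by
      intro u hiff hu b
      have hfun : (Subtype.val ∘ fun n : ℤ => ((u.subtypePerm hiff) ^ n) b) =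
          fun n : ℤ => (u ^ n) (b : ℕ) := by
        funext n
        show (((u.subtypePerm hiff) ^ n) b : ℕ) = (u ^ n) (b : ℕ)
        rw [Equiv.Perm.subtypePerm_zpow]
        rfl
      have h2 : Subtype.val '' (Set.range fun n : ℤ => ((u.subtypePerm hiff) ^ n) b) =
          Set.range fun n : ℤ => (u ^ n) (b : ℕ) := by
        rw [← Set.range_comp, hfun]
      have h3 := Set.ncard_image_of_injective
        (Set.range fun n : ℤ => ((u.subtypePerm hiff) ^ n) b) Subtype.val_injective
      rw [h2] at h3
      rw [← h3]
      exact hu (b : ℕ) b.2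
    have hc := isConj_of_orbits hq (σ := (xs i).subtypePerm hxiff)
      (τ := (ζ i).subtypePerm hζiff)
      (htransfer (xs i) hxiff (horbx i)) (htransfer (ζ i) hζiff (horbζ i))
    obtain ⟨π, hπ⟩ := isConj_iff.mp hc
    have hofσ : Equiv.Perm.ofSubtype ((xs i).subtypePerm hxiff) = xs i :=
      Equiv.Perm.ofSubtype_subtypePerm hxiff (fun ω hω => by rw [← hxsupp i]; exact hω)
    have hofτ : Equiv.Perm.ofSubtype ((ζ i).subtypePerm hζiff) = ζ i :=
      Equiv.Perm.ofSubtype_subtypePerm hζiff (fun ω hω => by rw [← hζpsupp i]; exact hω)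
    have hmul := congrArg (Equiv.Perm.ofSubtype
      (p := fun ω => ω ∈ ssupp (Xs i))) hπ
    rw [map_mul, map_mul, map_inv, hofσ, hofτ] at hmul
    rw [Xi, Set.mem_iUnion₂]
    refine ⟨(Equiv.Perm.ofSubtype π)⁻¹, ?_, ?_⟩
    · show (Equiv.Perm.ofSubtype π)⁻¹ ∈ symOn (ssupp (Xs i))
      apply (symOn (ssupp (Xs i))).inv_mem
      intro ω hω
      exact Equiv.Perm.ofSubtype_apply_of_not_mem π hω
    · rw [conjSet, Set.mem_image]
      refine ⟨xs i, hxs i, ?_⟩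
      show ((Equiv.Perm.ofSubtype π)⁻¹)⁻¹ * xs i * (Equiv.Perm.ofSubtype π)⁻¹ = ζ i
      rw [inv_inv]
      exact hmul
  -- conclude
  rw [hzeq]
  apply ofFn_prod_mem_prod
  intro i
  exact ⟨hcent_i i, hXi_i i⟩

end FPS
end
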